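/- Let β > 0, c > 0, and let M : (0,∞) → ℝ^{2×2} be measurable and essentially bounded with M(t) symmetric and xᵀ M(t) x ≥ c|x|² for all x ∈ ℝ² and almost every t. Let z_p, z_u, z_y ∈ L²((0,∞);ℝ²) and z_{y₀} ∈ ℝ². Consider the linear-quadratic problem: minimize J(δ_u) := ∫₀^∞ ( (1/2) δ_y(t)ᵀ M(t) δ_y(t) − z_p(t)·δ_y(t) + (β/2)|δ_u(t)|² − δ_u(t)·z_u(t) ) dt over δ_u ∈ L²((0,∞);ℝ²), where δ_y(t) := z_{y₀} + ∫₀^t ( δ_u(s) + z_y(s) ) ds. If there exists at least one δ_u ∈ L²((0,∞);ℝ²) for which δ_y ∈ L²((0,∞);ℝ²) and J(δ_u) is finite, then this problem admits a unique optimal solution. -/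

import Mathlib

open MeasureTheory Set Filter
open scoped RealInnerProductSpace ENNReal NNReal Topology

noncomputable section

local notation "E2" => EuclideanSpace ℝ (Fin 2)
local notation "μ₀" => volume.restrict (Ioi (0:ℝ))

/-- The state `δ_y(t) = z_{y₀} + ∫₀ᵗ (δ_u(s) + z_y(s)) ds` of the linearized problem. -/
def lqState (zy0 : EuclideanSpace ℝ (Fin 2)) (zy δu : ℝ → EuclideanSpace ℝ (Fin 2)) (t : ℝ) :
    EuclideanSpace ℝ (Fin 2) :=
  zy0 + ∫ s in (0 : ℝ)..t, (δu s + zy s)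

/-- The integrand of the linear-quadratic objective. -/
def lqIntegrand (β : ℝ) (M : ℝ → EuclideanSpace ℝ (Fin 2) →L[ℝ] EuclideanSpace ℝ (Fin 2))
    (zp zu : ℝ → EuclideanSpace ℝ (Fin 2)) (zy0 : EuclideanSpace ℝ (Fin 2))
    (zy δu : ℝ → EuclideanSpace ℝ (Fin 2)) (t : ℝ) : ℝ :=
  1 / 2 * ⟪M t (lqState zy0 zy δu t), lqState zy0 zy δu t⟫
    - ⟪zp t, lqState zy0 zy δu t⟫ + β / 2 * ‖δu t‖ ^ 2 - ⟪δu t, zu t⟫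

/-- The linear-quadratic objective `J(δ_u)`. -/
def lqCost (β : ℝ) (M : ℝ → EuclideanSpace ℝ (Fin 2) →L[ℝ] EuclideanSpace ℝ (Fin 2))
    (zp zu : ℝ → EuclideanSpace ℝ (Fin 2)) (zy0 : EuclideanSpace ℝ (Fin 2))
    (zy δu : ℝ → EuclideanSpace ℝ (Fin 2)) : ℝ :=
  ∫ t in Ioi (0 : ℝ), lqIntegrand β M zp zu zy0 zy δu t

/-- Admissibility: `δ_u ∈ L²`, the corresponding state `δ_y ∈ L²`, and the objective integrand
is integrable (i.e. `J(δ_u)` is finite). -/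
def lqAdm (β : ℝ) (M : ℝ → EuclideanSpace ℝ (Fin 2) →L[ℝ] EuclideanSpace ℝ (Fin 2))
    (zp zu : ℝ → EuclideanSpace ℝ (Fin 2)) (zy0 : EuclideanSpace ℝ (Fin 2))
    (zy δu : ℝ → EuclideanSpace ℝ (Fin 2)) : Prop :=
  MemLp δu 2 (volume.restrict (Ioi 0)) ∧
  MemLp (lqState zy0 zy δu) 2 (volume.restrict (Ioi 0)) ∧
  IntegrableOn (lqIntegrand β M zp zu zy0 zy δu) (Ioi 0) volume


section Aux

lemma lq_finMeas {t : ℝ} : IsFiniteMeasure (volume.restrict (Ioc (0:ℝ) t)) :=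
  ⟨by rw [Measure.restrict_apply_univ]; exact measure_Ioc_lt_top⟩

lemma lq_memℒp_Ioc {f : ℝ → E2} (hf : MemLp f 2 μ₀) (t : ℝ) :
    MemLp f 2 (volume.restrict (Ioc (0:ℝ) t)) := by
  have h := hf.restrict (Ioc (0:ℝ) t)
  rwa [Measure.restrict_restrict measurableSet_Ioc,
    inter_eq_left.mpr Ioc_subset_Ioi_self] at h

lemma lq_intervalIntegrable {f : ℝ → E2} (hf : MemLp f 2 μ₀) {t : ℝ} (ht : 0 ≤ t) :
    IntervalIntegrable f volume 0 t := by
  rw [intervalIntegrable_iff_integrableOn_Ioc_of_le ht]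
  haveI := lq_finMeas (t := t)
  exact (lq_memℒp_Ioc hf t).integrable one_le_two

end Aux

section Aux2

lemma lq_state_aesm {zy0 : E2} {zy f : ℝ → E2} (hf : MemLp f 2 μ₀) (hzy : MemLp zy 2 μ₀) :
    AEStronglyMeasurable (lqState zy0 zy f) μ₀ := by
  have hg : MemLp (fun s => f s + zy s) 2 μ₀ := hf.add hzy
  have hcont : ContinuousOn (lqState zy0 zy f) (Ioi (0:ℝ)) := by
    intro t ht
    have h1 : IntegrableOn (fun s => f s + zy s) (Icc (0:ℝ) (t+1)) volume := by
      rw [integrableOn_Icc_iff_integrableOn_Ioc]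
      exact (intervalIntegrable_iff_integrableOn_Ioc_of_le (by linarith [mem_Ioi.mp ht] : (0:ℝ) ≤ t+1)).mp
        (lq_intervalIntegrable hg (by linarith [mem_Ioi.mp ht]))
    have h2 : ContinuousOn (fun x => ∫ s in (0:ℝ)..x, (f s + zy s)) (uIcc (0:ℝ) (t+1)) := by
      apply intervalIntegral.continuousOn_primitive_interval
      rwa [uIcc_of_le (by linarith [mem_Ioi.mp ht] : (0:ℝ) ≤ t+1)]
    have ht' : t ∈ uIcc (0:ℝ) (t+1) := by
      rw [uIcc_of_le (by linarith [mem_Ioi.mp ht] : (0:ℝ) ≤ t+1)]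
      exact ⟨le_of_lt (mem_Ioi.mp ht), by linarith⟩
    have h3 : ContinuousWithinAt (fun x => ∫ s in (0:ℝ)..x, (f s + zy s)) (Ioi (0:ℝ)) t := by
      refine (h2 t ht').mono_of_mem_nhdsWithin ?_
      rw [mem_nhdsWithin]
      refine ⟨Iio (t+1), isOpen_Iio, by simp, ?_⟩
      rintro x ⟨hx1, hx2⟩
      rw [uIcc_of_le (by linarith [mem_Ioi.mp ht] : (0:ℝ) ≤ t+1)]
      exact ⟨le_of_lt hx2, le_of_lt hx1⟩
    exact (continuousWithinAt_const.add h3 : ContinuousWithinAt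
      (fun x => zy0 + ∫ s in (0:ℝ)..x, (f s + zy s)) (Ioi (0:ℝ)) t)
  exact hcont.aestronglyMeasurable measurableSet_Ioi

lemma lq_state_sub {zy0 : E2} {zy u v : ℝ → E2} (hu : MemLp u 2 μ₀) (hv : MemLp v 2 μ₀)
    (hzy : MemLp zy 2 μ₀) {t : ℝ} (ht : 0 ≤ t) :
    lqState zy0 zy u t - lqState zy0 zy v t = ∫ s in (0:ℝ)..t, (u s - v s) := by
  unfold lqState
  have h1 : IntervalIntegrable (fun s => u s + zy s) volume 0 t :=
    lq_intervalIntegrable (hu.add hzy) ht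
  have h2 : IntervalIntegrable (fun s => v s + zy s) volume 0 t :=
    lq_intervalIntegrable (hv.add hzy) ht
  have h3 : (∫ s in (0:ℝ)..t, (u s + zy s)) - (∫ s in (0:ℝ)..t, (v s + zy s))
      = ∫ s in (0:ℝ)..t, (u s - v s) := by
    rw [← intervalIntegral.integral_sub h1 h2]
    congr 1; funext s; abel
  rw [← h3]; abel

lemma lq_state_mid {zy0 : E2} {zy u v : ℝ → E2} (hu : MemLp u 2 μ₀) (hv : MemLp v 2 μ₀)
    (hzy : MemLp zy 2 μ₀) {t : ℝ} (ht : 0 ≤ t) :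
    lqState zy0 zy (fun s => (2⁻¹:ℝ) • (u s + v s)) t
      = (2⁻¹:ℝ) • (lqState zy0 zy u t + lqState zy0 zy v t) := by
  unfold lqState
  have h1 : IntervalIntegrable (fun s => u s + zy s) volume 0 t :=
    lq_intervalIntegrable (hu.add hzy) ht
  have h2 : IntervalIntegrable (fun s => v s + zy s) volume 0 t :=
    lq_intervalIntegrable (hv.add hzy) ht
  have key : (fun s => (2⁻¹:ℝ) • (u s + v s) + zy s)
      = fun s => (2⁻¹:ℝ) • ((u s + zy s) + (v s + zy s)) := by
    funext s; module
  rw [key]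
  rw [intervalIntegral.integral_smul, intervalIntegral.integral_add h1 h2]
  module

end Aux2

section Aux3

lemma lq_M_apply_aesm {M : ℝ → E2 →L[ℝ] E2}
    (hMeas : ∀ x, AEStronglyMeasurable (fun t => M t x) μ₀)
    {f : ℝ → E2} (hf : AEStronglyMeasurable f μ₀) :
    AEStronglyMeasurable (fun t => M t (f t)) μ₀ := by
  have hb : ∀ t, f t = ∑ i : Fin 2, (f t i) • (EuclideanSpace.basisFun (Fin 2) ℝ) i := by
    intro t
    have := (EuclideanSpace.basisFun (Fin 2) ℝ).sum_repr (f t)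
    simp only [EuclideanSpace.basisFun_repr] at this
    exact this.symm
  have : (fun t => M t (f t))
      = fun t => ∑ i : Fin 2, (f t i) • (M t ((EuclideanSpace.basisFun (Fin 2) ℝ) i)) := by
    funext t
    rw [hb t]
    simp [_root_.map_sum, _root_.map_smul]
  rw [this]
  apply Finset.aestronglyMeasurable_fun_sum
  intro i _
  have h1 : AEStronglyMeasurable (fun t => f t i) μ₀ :=
    (EuclideanSpace.proj (𝕜 := ℝ) i).continuous.comp_aestronglyMeasurable hf
  exact h1.smul (hMeas _)

lemma lq_inner_integrable {f g : ℝ → E2} (hf : MemLp f 2 μ₀) (hg : MemLp g 2 μ₀) :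
    Integrable (fun t => ⟪f t, g t⟫) μ₀ := by
  have h := L2.integrable_inner (𝕜 := ℝ) (hf.toLp f) (hg.toLp g)
  refine h.congr ?_
  filter_upwards [hf.coeFn_toLp, hg.coeFn_toLp] with t h1 h2
  rw [h1, h2]

lemma lq_normsq_integrable {f : ℝ → E2} (hf : MemLp f 2 μ₀) :
    Integrable (fun t => ‖f t‖ ^ 2) μ₀ := by
  refine (lq_inner_integrable hf hf).congr (Eventually.of_forall fun t => ?_)
  exact real_inner_self_eq_norm_sq _

lemma lq_M_memℒp {M : ℝ → E2 →L[ℝ] E2}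
    (hMeas : ∀ x, AEStronglyMeasurable (fun t => M t x) μ₀)
    {Cb : ℝ} (hCb : ∀ᵐ t ∂μ₀, ‖M t‖ ≤ Cb)
    {f : ℝ → E2} (hf : MemLp f 2 μ₀) :
    MemLp (fun t => M t (f t)) 2 μ₀ := by
  refine hf.of_le_mul (c := Cb) (lq_M_apply_aesm hMeas hf.1) ?_
  filter_upwards [hCb] with t ht
  calc ‖M t (f t)‖ ≤ ‖M t‖ * ‖f t‖ := (M t).le_opNorm _
    _ ≤ Cb * ‖f t‖ := mul_le_mul_of_nonneg_right ht (norm_nonneg _)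

lemma lq_integrand_integrable {β : ℝ} {M : ℝ → E2 →L[ℝ] E2}
    (hMeas : ∀ x, AEStronglyMeasurable (fun t => M t x) μ₀)
    {Cb : ℝ} (hCb : ∀ᵐ t ∂μ₀, ‖M t‖ ≤ Cb)
    {zp zu : ℝ → E2} (hzp : MemLp zp 2 μ₀) (hzu : MemLp zu 2 μ₀)
    {zy0 : E2} {zy u : ℝ → E2}
    (hu : MemLp u 2 μ₀) (hy : MemLp (lqState zy0 zy u) 2 μ₀) :
    Integrable (lqIntegrand β M zp zu zy0 zy u) μ₀ := by
  have h1 : Integrable (fun t => ⟪M t (lqState zy0 zy u t), lqState zy0 zy u t⟫) μ₀ :=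
    lq_inner_integrable (lq_M_memℒp hMeas hCb hy) hy
  have h2 : Integrable (fun t => ⟪zp t, lqState zy0 zy u t⟫) μ₀ := lq_inner_integrable hzp hy
  have h3 : Integrable (fun t => ‖u t‖ ^ 2) μ₀ := lq_normsq_integrable hu
  have h4 : Integrable (fun t => ⟪u t, zu t⟫) μ₀ := lq_inner_integrable hu hzu
  exact (((h1.const_mul (1/2)).sub h2).add (h3.const_mul (β/2))).sub h4

end Aux3

section Aux4

variable {β c : ℝ} {M : ℝ → E2 →L[ℝ] E2} {zp zu zy : ℝ → E2} {zy0 : E2}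

lemma lq_mid_adm (hMeas : ∀ x, AEStronglyMeasurable (fun t => M t x) μ₀)
    {Cb : ℝ} (hCb : ∀ᵐ t ∂μ₀, ‖M t‖ ≤ Cb)
    (hzp : MemLp zp 2 μ₀) (hzu : MemLp zu 2 μ₀) (hzy : MemLp zy 2 μ₀)
    {u v : ℝ → E2} (hu : lqAdm β M zp zu zy0 zy u) (hv : lqAdm β M zp zu zy0 zy v) :
    lqAdm β M zp zu zy0 zy (fun s => (2⁻¹:ℝ) • (u s + v s)) := by
  have hmu : MemLp (fun s => (2⁻¹:ℝ) • (u s + v s)) 2 μ₀ := (hu.1.add hv.1).const_smul (2⁻¹:ℝ)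
  have hae : lqState zy0 zy (fun s => (2⁻¹:ℝ) • (u s + v s))
      =ᵐ[μ₀] fun t => (2⁻¹:ℝ) • (lqState zy0 zy u t + lqState zy0 zy v t) := by
    filter_upwards [ae_restrict_mem measurableSet_Ioi] with t ht
    exact lq_state_mid hu.1 hv.1 hzy (le_of_lt ht)
  have hmy : MemLp (lqState zy0 zy (fun s => (2⁻¹:ℝ) • (u s + v s))) 2 μ₀ :=
    ((hu.2.1.add hv.2.1).const_smul (2⁻¹:ℝ)).ae_eq hae.symm
  exact ⟨hmu, hmy, lq_integrand_integrable hMeas hCb hzp hzu hmu hmy⟩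

lemma lq_cost_mid (hMeas : ∀ x, AEStronglyMeasurable (fun t => M t x) μ₀)
    {Cb : ℝ} (hCb : ∀ᵐ t ∂μ₀, ‖M t‖ ≤ Cb)
    (hzp : MemLp zp 2 μ₀) (hzu : MemLp zu 2 μ₀) (hzy : MemLp zy 2 μ₀)
    {u v : ℝ → E2} (hu : lqAdm β M zp zu zy0 zy u) (hv : lqAdm β M zp zu zy0 zy v) :
    lqCost β M zp zu zy0 zy (fun s => (2⁻¹:ℝ) • (u s + v s))
      = 2⁻¹ * (lqCost β M zp zu zy0 zy u + lqCost β M zp zu zy0 zy v)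
        - ∫ t, ((1/8) * ⟪M t (lqState zy0 zy u t - lqState zy0 zy v t),
              lqState zy0 zy u t - lqState zy0 zy v t⟫
            + β/8 * ‖u t - v t‖ ^ 2) ∂μ₀ := by
  have hyd : MemLp (fun t => lqState zy0 zy u t - lqState zy0 zy v t) 2 μ₀ := hu.2.1.sub hv.2.1
  have hd1 : Integrable (fun t => ⟪M t (lqState zy0 zy u t - lqState zy0 zy v t),
      lqState zy0 zy u t - lqState zy0 zy v t⟫) μ₀ :=
    lq_inner_integrable (lq_M_memℒp hMeas hCb hyd) hyd
  have hd2 : Integrable (fun t => ‖u t - v t‖ ^ 2) μ₀ := lq_normsq_integrable (hu.1.sub hv.1)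
  have hd : Integrable (fun t => (1/8) * ⟪M t (lqState zy0 zy u t - lqState zy0 zy v t),
      lqState zy0 zy u t - lqState zy0 zy v t⟫ + β/8 * ‖u t - v t‖ ^ 2) μ₀ :=
    (hd1.const_mul _).add (hd2.const_mul _)
  have hIu : Integrable (lqIntegrand β M zp zu zy0 zy u) μ₀ := hu.2.2
  have hIv : Integrable (lqIntegrand β M zp zu zy0 zy v) μ₀ := hv.2.2
  have hpt : ∀ᵐ t ∂μ₀, lqIntegrand β M zp zu zy0 zy (fun s => (2⁻¹:ℝ) • (u s + v s)) t
      = 2⁻¹ * (lqIntegrand β M zp zu zy0 zy u t + lqIntegrand β M zp zu zy0 zy v t)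
        - ((1/8) * ⟪M t (lqState zy0 zy u t - lqState zy0 zy v t),
              lqState zy0 zy u t - lqState zy0 zy v t⟫
            + β/8 * ‖u t - v t‖ ^ 2) := by
    filter_upwards [ae_restrict_mem measurableSet_Ioi] with t ht
    have hmid := lq_state_mid (zy0 := zy0) hu.1 hv.1 hzy (le_of_lt ht)
    unfold lqIntegrand
    rw [hmid]
    simp only [← real_inner_self_eq_norm_sq]
    simp only [_root_.map_smul, map_add, map_sub, inner_add_left, inner_add_right,
      inner_sub_left, inner_sub_right, real_inner_smul_left, real_inner_smul_right]
    ring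
  have hcost : lqCost β M zp zu zy0 zy (fun s => (2⁻¹:ℝ) • (u s + v s))
      = ∫ t, (2⁻¹ * (lqIntegrand β M zp zu zy0 zy u t + lqIntegrand β M zp zu zy0 zy v t)
        - ((1/8) * ⟪M t (lqState zy0 zy u t - lqState zy0 zy v t),
              lqState zy0 zy u t - lqState zy0 zy v t⟫
            + β/8 * ‖u t - v t‖ ^ 2)) ∂μ₀ := integral_congr_ae hpt
  have hII : Integrable (fun t => 2⁻¹ * (lqIntegrand β M zp zu zy0 zy u t
      + lqIntegrand β M zp zu zy0 zy v t)) μ₀ := (hIu.add hIv).const_mul _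
  rw [hcost, integral_sub hII hd, integral_const_mul, integral_add hIu hIv]
  rfl

lemma lq_strong_conv (hc : 0 < c)
    (hMeas : ∀ x, AEStronglyMeasurable (fun t => M t x) μ₀)
    {Cb : ℝ} (hCb : ∀ᵐ t ∂μ₀, ‖M t‖ ≤ Cb)
    (hPos : ∀ᵐ t ∂μ₀, ∀ x : E2, c * ‖x‖ ^ 2 ≤ ⟪M t x, x⟫)
    (hzp : MemLp zp 2 μ₀) (hzu : MemLp zu 2 μ₀) (hzy : MemLp zy 2 μ₀)
    {u v : ℝ → E2} (hu : lqAdm β M zp zu zy0 zy u) (hv : lqAdm β M zp zu zy0 zy v) :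
    lqCost β M zp zu zy0 zy (fun s => (2⁻¹:ℝ) • (u s + v s))
      ≤ 2⁻¹ * (lqCost β M zp zu zy0 zy u + lqCost β M zp zu zy0 zy v)
        - (β/8) * ∫ t, ‖u t - v t‖ ^ 2 ∂μ₀ := by
  rw [lq_cost_mid hMeas hCb hzp hzu hzy hu hv]
  have hyd : MemLp (fun t => lqState zy0 zy u t - lqState zy0 zy v t) 2 μ₀ := hu.2.1.sub hv.2.1
  have hd1 : Integrable (fun t => ⟪M t (lqState zy0 zy u t - lqState zy0 zy v t),
      lqState zy0 zy u t - lqState zy0 zy v t⟫) μ₀ :=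
    lq_inner_integrable (lq_M_memℒp hMeas hCb hyd) hyd
  have hd2 : Integrable (fun t => ‖u t - v t‖ ^ 2) μ₀ := lq_normsq_integrable (hu.1.sub hv.1)
  have key : (β/8) * ∫ t, ‖u t - v t‖ ^ 2 ∂μ₀
      ≤ ∫ t, ((1/8) * ⟪M t (lqState zy0 zy u t - lqState zy0 zy v t),
              lqState zy0 zy u t - lqState zy0 zy v t⟫
            + β/8 * ‖u t - v t‖ ^ 2) ∂μ₀ := by
    rw [← integral_const_mul]
    refine integral_mono_ae (by exact hd2.const_mul _)
      (by exact (hd1.const_mul _).add (hd2.const_mul _)) ?_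
    filter_upwards [hPos] with t ht
    have h1 := ht (lqState zy0 zy u t - lqState zy0 zy v t)
    have h2 : (0:ℝ) ≤ c * ‖lqState zy0 zy u t - lqState zy0 zy v t‖ ^ 2 :=
      mul_nonneg hc.le (sq_nonneg _)
    linarith
  linarith

lemma lq_integrand_lower (hc : 0 < c) (hβ : 0 < β)
    (hPos : ∀ᵐ t ∂μ₀, ∀ x : E2, c * ‖x‖ ^ 2 ≤ ⟪M t x, x⟫) (u : ℝ → E2) :
    ∀ᵐ t ∂μ₀, (c/4) * ‖lqState zy0 zy u t‖ ^ 2 + (β/4) * ‖u t‖ ^ 2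
      - ((1/c) * ‖zp t‖ ^ 2 + (1/β) * ‖zu t‖ ^ 2) ≤ lqIntegrand β M zp zu zy0 zy u t := by
    filter_upwards [hPos] with t ht
    have h3 := ht (lqState zy0 zy u t)
    have h1 : ⟪zp t, lqState zy0 zy u t⟫ ≤ ‖zp t‖ * ‖lqState zy0 zy u t‖ :=
      real_inner_le_norm _ _
    have h2 : ⟪u t, zu t⟫ ≤ ‖u t‖ * ‖zu t‖ := real_inner_le_norm _ _
    have h4 : ‖zp t‖ * ‖lqState zy0 zy u t‖
        ≤ c/4 * ‖lqState zy0 zy u t‖ ^ 2 + 1/c * ‖zp t‖ ^ 2 := by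
      rw [div_mul_eq_mul_div, one_div, inv_mul_eq_div, div_add_div _ _ (by norm_num) hc.ne',
        le_div_iff₀ (by linarith)]
      nlinarith [sq_nonneg (c * ‖lqState zy0 zy u t‖ - 2 * ‖zp t‖)]
    have h5 : ‖u t‖ * ‖zu t‖ ≤ β/4 * ‖u t‖ ^ 2 + 1/β * ‖zu t‖ ^ 2 := by
      rw [div_mul_eq_mul_div, one_div, inv_mul_eq_div, div_add_div _ _ (by norm_num) hβ.ne',
        le_div_iff₀ (by linarith)]
      nlinarith [sq_nonneg (β * ‖u t‖ - 2 * ‖zu t‖)]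
    unfold lqIntegrand
    nlinarith

lemma lq_lower (hc : 0 < c) (hβ : 0 < β)
    (hPos : ∀ᵐ t ∂μ₀, ∀ x : E2, c * ‖x‖ ^ 2 ≤ ⟪M t x, x⟫)
    (hzp : MemLp zp 2 μ₀) (hzu : MemLp zu 2 μ₀)
    {u : ℝ → E2} (hu : lqAdm β M zp zu zy0 zy u) :
    (c/4) * (∫ t, ‖lqState zy0 zy u t‖ ^ 2 ∂μ₀) + (β/4) * (∫ t, ‖u t‖ ^ 2 ∂μ₀)
      - ((1/c) * (∫ t, ‖zp t‖ ^ 2 ∂μ₀) + (1/β) * (∫ t, ‖zu t‖ ^ 2 ∂μ₀))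
      ≤ lqCost β M zp zu zy0 zy u := by
  have hy2 : Integrable (fun t => ‖lqState zy0 zy u t‖ ^ 2) μ₀ := lq_normsq_integrable hu.2.1
  have hu2 : Integrable (fun t => ‖u t‖ ^ 2) μ₀ := lq_normsq_integrable hu.1
  have hzp2 : Integrable (fun t => ‖zp t‖ ^ 2) μ₀ := lq_normsq_integrable hzp
  have hzu2 : Integrable (fun t => ‖zu t‖ ^ 2) μ₀ := lq_normsq_integrable hzu
  have hpt := lq_integrand_lower (zp := zp) (zu := zu) (zy0 := zy0) (zy := zy) hc hβ hPos u
  have hA : Integrable (fun t => c/4 * ‖lqState zy0 zy u t‖ ^ 2 + β/4 * ‖u t‖ ^ 2) μ₀ :=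
    (hy2.const_mul _).add (hu2.const_mul _)
  have hB : Integrable (fun t => 1/c * ‖zp t‖ ^ 2 + 1/β * ‖zu t‖ ^ 2) μ₀ :=
    (hzp2.const_mul _).add (hzu2.const_mul _)
  have hAB : Integrable (fun t => c/4 * ‖lqState zy0 zy u t‖ ^ 2 + β/4 * ‖u t‖ ^ 2
      - (1/c * ‖zp t‖ ^ 2 + 1/β * ‖zu t‖ ^ 2)) μ₀ := hA.sub hB
  calc (c/4) * (∫ t, ‖lqState zy0 zy u t‖ ^ 2 ∂μ₀) + (β/4) * (∫ t, ‖u t‖ ^ 2 ∂μ₀)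
      - ((1/c) * (∫ t, ‖zp t‖ ^ 2 ∂μ₀) + (1/β) * (∫ t, ‖zu t‖ ^ 2 ∂μ₀))
      = ∫ t, (c/4 * ‖lqState zy0 zy u t‖ ^ 2 + β/4 * ‖u t‖ ^ 2
        - (1/c * ‖zp t‖ ^ 2 + 1/β * ‖zu t‖ ^ 2)) ∂μ₀ := by
        rw [integral_sub hA hB, integral_add (hy2.const_mul _) (hu2.const_mul _),
          integral_add (hzp2.const_mul _) (hzu2.const_mul _),
          integral_const_mul, integral_const_mul, integral_const_mul, integral_const_mul]
    _ ≤ lqCost β M zp zu zy0 zy u := integral_mono_ae hAB hu.2.2 hpt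

end Aux4

section Aux5

lemma lq_norm_toLp_sub_sq {u v : ℝ → E2} (hu : MemLp u 2 μ₀) (hv : MemLp v 2 μ₀) :
    ‖hu.toLp u - hv.toLp v‖ ^ 2 = ∫ t, ‖u t - v t‖ ^ 2 ∂μ₀ := by
  have h := L2.inner_def (𝕜 := ℝ) (hu.toLp u - hv.toLp v) (hu.toLp u - hv.toLp v)
  rw [real_inner_self_eq_norm_sq] at h
  rw [h]
  refine integral_congr_ae ?_
  filter_upwards [Lp.coeFn_sub (hu.toLp u) (hv.toLp v), hu.coeFn_toLp,
    hv.coeFn_toLp] with t h1 h2 h3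
  rw [h1]
  simp only [Pi.sub_apply, h2, h3]
  exact real_inner_self_eq_norm_sq _

lemma lq_state_dist {zy0 : E2} {zy u v : ℝ → E2} (hu : MemLp u 2 μ₀) (hv : MemLp v 2 μ₀)
    (hzy : MemLp zy 2 μ₀) {t : ℝ} (ht : 0 < t) :
    ‖lqState zy0 zy u t - lqState zy0 zy v t‖
      ≤ Real.sqrt t * (eLpNorm (fun s => u s - v s) 2 μ₀).toReal := by
  rw [lq_state_sub hu hv hzy ht.le, intervalIntegral.integral_of_le ht.le]
  haveI := lq_finMeas (t := t)
  have hm2 : MemLp (fun s => u s - v s) 2 (volume.restrict (Ioc (0:ℝ) t)) :=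
    lq_memℒp_Ioc (hu.sub hv) t
  have hmeasu : (volume.restrict (Ioc (0:ℝ) t)) Set.univ = ENNReal.ofReal t := by
    rw [Measure.restrict_apply_univ, Real.volume_Ioc, sub_zero]
  have hfin : (ENNReal.ofReal t) ^ (2⁻¹:ℝ) ≠ ∞ :=
    ENNReal.rpow_ne_top_of_nonneg (by norm_num) ENNReal.ofReal_ne_top
  calc ‖∫ s in Ioc (0:ℝ) t, (u s - v s)‖
      ≤ ∫ s in Ioc (0:ℝ) t, ‖u s - v s‖ := norm_integral_le_integral_norm _
    _ = (eLpNorm (fun s => u s - v s) 1 (volume.restrict (Ioc (0:ℝ) t))).toReal := by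
        rw [integral_norm_eq_lintegral_enorm hm2.1, eLpNorm_one_eq_lintegral_enorm]
    _ ≤ ((eLpNorm (fun s => u s - v s) 2 μ₀) * (ENNReal.ofReal t) ^ (2⁻¹:ℝ)).toReal := by
        apply ENNReal.toReal_mono (ENNReal.mul_ne_top (hu.sub hv).2.ne hfin)
        calc eLpNorm (fun s => u s - v s) 1 (volume.restrict (Ioc (0:ℝ) t))
            ≤ eLpNorm (fun s => u s - v s) 2 (volume.restrict (Ioc (0:ℝ) t))
              * (volume.restrict (Ioc (0:ℝ) t)) Set.univ
                ^ (1/(1:ℝ≥0∞).toReal - 1/(2:ℝ≥0∞).toReal) :=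
              eLpNorm_le_eLpNorm_mul_rpow_measure_univ one_le_two hm2.1
          _ = eLpNorm (fun s => u s - v s) 2 (volume.restrict (Ioc (0:ℝ) t))
              * (ENNReal.ofReal t) ^ (2⁻¹:ℝ) := by
              rw [hmeasu]
              norm_num
          _ ≤ (eLpNorm (fun s => u s - v s) 2 μ₀) * (ENNReal.ofReal t) ^ (2⁻¹:ℝ) := by
              gcongr
              exact Ioc_subset_Ioi_self
    _ = Real.sqrt t * (eLpNorm (fun s => u s - v s) 2 μ₀).toReal := by
        rw [ENNReal.toReal_mul, ← ENNReal.toReal_rpow, ENNReal.toReal_ofReal ht.le,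
          Real.sqrt_eq_rpow, mul_comm]
        norm_num

end Aux5

/-- The infinite-horizon linear-quadratic problem with uniformly positive
definite symmetric weight `M` admits a unique optimal solution, provided it admits at least one
admissible control with finite cost. -/
theorem statement_14 (β c : ℝ) (hβ : 0 < β) (hc : 0 < c)
    (M : ℝ → EuclideanSpace ℝ (Fin 2) →L[ℝ] EuclideanSpace ℝ (Fin 2))
    (hMeas : ∀ x, AEStronglyMeasurable (fun t => M t x) (volume.restrict (Ioi 0)))
    (hBdd : ∃ Cb : ℝ, ∀ᵐ t ∂(volume.restrict (Ioi (0 : ℝ))), ‖M t‖ ≤ Cb)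
    (hSymm : ∀ᵐ t ∂(volume.restrict (Ioi (0 : ℝ))),
      ∀ x y : EuclideanSpace ℝ (Fin 2), ⟪M t x, y⟫ = ⟪x, M t y⟫)
    (hPos : ∀ᵐ t ∂(volume.restrict (Ioi (0 : ℝ))),
      ∀ x : EuclideanSpace ℝ (Fin 2), c * ‖x‖ ^ 2 ≤ ⟪M t x, x⟫)
    (zp zu zy : ℝ → EuclideanSpace ℝ (Fin 2))
    (hzp : MemLp zp 2 (volume.restrict (Ioi 0)))
    (hzu : MemLp zu 2 (volume.restrict (Ioi 0)))
    (hzy : MemLp zy 2 (volume.restrict (Ioi 0)))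
    (zy0 : EuclideanSpace ℝ (Fin 2))
    (hex : ∃ δu : ℝ → EuclideanSpace ℝ (Fin 2), lqAdm β M zp zu zy0 zy δu) :
    ∃ δu : ℝ → EuclideanSpace ℝ (Fin 2), lqAdm β M zp zu zy0 zy δu ∧
      (∀ v, lqAdm β M zp zu zy0 zy v →
        lqCost β M zp zu zy0 zy δu ≤ lqCost β M zp zu zy0 zy v) ∧
      ∀ w, lqAdm β M zp zu zy0 zy w →
        (∀ v, lqAdm β M zp zu zy0 zy v →
          lqCost β M zp zu zy0 zy w ≤ lqCost β M zp zu zy0 zy v) →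
        w =ᵐ[volume.restrict (Ioi (0 : ℝ))] δu := by
  classical
  obtain ⟨Cb, hCb⟩ := hBdd
  set J : (ℝ → E2) → ℝ := lqCost β M zp zu zy0 zy with hJdef
  set Adm : (ℝ → E2) → Prop := lqAdm β M zp zu zy0 zy with hAdmdef
  set A : Set ℝ := J '' {w | Adm w} with hAdef
  have hAne : A.Nonempty := ⟨J hex.choose, hex.choose, hex.choose_spec, rfl⟩
  set K : ℝ := (1/c) * (∫ t, ‖zp t‖ ^ 2 ∂μ₀) + (1/β) * (∫ t, ‖zu t‖ ^ 2 ∂μ₀) with hKdef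
  have hlow : ∀ w, Adm w → -K ≤ J w := by
    intro w hw
    have h := lq_lower hc hβ hPos hzp hzu hw
    have h1 : 0 ≤ (c/4) * (∫ t, ‖lqState zy0 zy w t‖ ^ 2 ∂μ₀) :=
      mul_nonneg (by positivity) (integral_nonneg fun t => sq_nonneg _)
    have h2 : 0 ≤ (β/4) * (∫ t, ‖w t‖ ^ 2 ∂μ₀) :=
      mul_nonneg (by positivity) (integral_nonneg fun t => sq_nonneg _)
    simp only [hKdef]
    linarith
  have hbdd : BddBelow A := by
    refine ⟨-K, ?_⟩
    rintro r ⟨w, hw, rfl⟩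
    exact hlow w hw
  set m : ℝ := sInf A with hmdef
  have hm_le : ∀ w, Adm w → m ≤ J w := fun w hw => csInf_le hbdd ⟨w, hw, rfl⟩
  have hmK : -K ≤ m := le_csInf hAne (by rintro r ⟨w, hw, rfl⟩; exact hlow w hw)
  -- minimizing sequence
  have hseq : ∀ n : ℕ, ∃ w, Adm w ∧ J w < m + 1/(n+1) := by
    intro n
    have hlt : sInf A < m + 1/(n+1) := by
      rw [← hmdef]
      have : (0:ℝ) < 1/(n+1) := by positivity
      linarith
    obtain ⟨r, hrA, hrlt⟩ := exists_lt_of_csInf_lt hAne hlt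
    obtain ⟨w, hw, rfl⟩ := hrA
    exact ⟨w, hw, hrlt⟩
  choose u hadm hJlt using hseq
  have hJge : ∀ n, m ≤ J (u n) := fun n => hm_le _ (hadm n)
  -- strong convexity quantitative bound
  have hkey : ∀ n k : ℕ, (β/8) * (∫ t, ‖u n t - u k t‖ ^ 2 ∂μ₀)
      ≤ 2⁻¹ * (J (u n) + J (u k)) - m := by
    intro n k
    have h1 := lq_strong_conv hc hMeas hCb hPos hzp hzu hzy (hadm n) (hadm k)
    have h2 := hm_le _ (lq_mid_adm hMeas hCb hzp hzu hzy (hadm n) (hadm k))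
    linarith
  -- Cauchy sequence in L²
  set U : ℕ → Lp E2 2 μ₀ := fun n => ((hadm n).1.toLp (u n)) with hUdef
  have hUcauchy : CauchySeq U := by
    rw [Metric.cauchySeq_iff]
    intro ε hε
    obtain ⟨N, hN⟩ := exists_nat_one_div_lt (show (0:ℝ) < (β/8) * ε^2 by positivity)
    refine ⟨N, fun n hn k hk => ?_⟩
    have hd2 : dist (U n) (U k) ^ 2 = ∫ t, ‖u n t - u k t‖ ^ 2 ∂μ₀ := by
      rw [dist_eq_norm]
      exact lq_norm_toLp_sub_sq (hadm n).1 (hadm k).1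
    have hb1 : 1/((n:ℝ)+1) ≤ 1/((N:ℝ)+1) := by
      apply one_div_le_one_div_of_le (by positivity)
      exact_mod_cast Nat.succ_le_succ hn
    have hb2 : 1/((k:ℝ)+1) ≤ 1/((N:ℝ)+1) := by
      apply one_div_le_one_div_of_le (by positivity)
      exact_mod_cast Nat.succ_le_succ hk
    have h3 := hkey n k
    have h4 := hJlt n
    have h5 := hJlt k
    have h6 : (β/8) * dist (U n) (U k) ^ 2 < (β/8) * ε^2 := by
      rw [hd2]
      calc (β/8) * (∫ t, ‖u n t - u k t‖ ^ 2 ∂μ₀) ≤ 2⁻¹ * (J (u n) + J (u k)) - m := h3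
        _ < 1/((N:ℝ)+1) := by linarith
        _ < (β/8) * ε^2 := hN
    have h7 : dist (U n) (U k) ^ 2 < ε ^ 2 := by
      have hb : (0:ℝ) < β/8 := by positivity
      nlinarith
    exact lt_of_pow_lt_pow_left₀ 2 hε.le h7
  obtain ⟨Ulim, hUlim⟩ := cauchySeq_tendsto_of_complete hUcauchy
  set ustar : ℝ → E2 := ⇑Ulim with hustardef
  have hustar : MemLp ustar 2 μ₀ := Lp.memLp Ulim
  -- convergence of eLpNorm
  have heL : Tendsto (fun n => eLpNorm (fun s => u n s - ustar s) 2 μ₀) atTop (𝓝 0) := by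
    have h1 := (Lp.tendsto_Lp_iff_tendsto_eLpNorm' U Ulim).mp hUlim
    refine h1.congr fun n => ?_
    apply eLpNorm_congr_ae
    filter_upwards [(hadm n).1.coeFn_toLp] with t h2
    simp only [Pi.sub_apply, hUdef]
    rw [h2]
  have herr : Tendsto (fun n => (eLpNorm (fun s => u n s - ustar s) 2 μ₀).toReal)
      atTop (𝓝 0) := by
    have := (ENNReal.tendsto_toReal (a := 0) (by simp)).comp heL
    simpa [Function.comp_def] using this
  -- pointwise convergence of states
  have hstate : ∀ t ∈ Ioi (0:ℝ), Tendsto (fun n => lqState zy0 zy (u n) t) atTop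
      (𝓝 (lqState zy0 zy ustar t)) := by
    intro t ht
    rw [tendsto_iff_dist_tendsto_zero]
    have hbound : ∀ n, dist (lqState zy0 zy (u n) t) (lqState zy0 zy ustar t)
        ≤ Real.sqrt t * (eLpNorm (fun s => u n s - ustar s) 2 μ₀).toReal := by
      intro n
      rw [dist_eq_norm]
      exact lq_state_dist (hadm n).1 hustar hzy ht
    have hlim : Tendsto (fun n => Real.sqrt t * (eLpNorm (fun s => u n s - ustar s) 2 μ₀).toReal)
        atTop (𝓝 0) := by
      simpa using herr.const_mul (Real.sqrt t)
    exact tendsto_of_tendsto_of_tendsto_of_le_of_le tendsto_const_nhds hlim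
      (fun n => dist_nonneg) hbound
  -- J (u n) → m
  have hJtend : Tendsto (fun n => J (u n)) atTop (𝓝 m) := by
    have h1 : Tendsto (fun n : ℕ => m + 1/((n:ℝ)+1)) atTop (𝓝 m) := by
      have := tendsto_one_div_add_atTop_nhds_zero_nat (𝕜 := ℝ)
      simpa using (tendsto_const_nhds (x := m)).add this
    exact tendsto_of_tendsto_of_tendsto_of_le_of_le tendsto_const_nhds h1 hJge
      (fun n => (hJlt n).le)
  -- bounded state L² norms along the sequence
  have hybnd : ∀ n, ∫ t, ‖lqState zy0 zy (u n) t‖ ^ 2 ∂μ₀ ≤ (4/c) * (m + 1 + K) := by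
    intro n
    have h := lq_lower hc hβ hPos hzp hzu (hadm n)
    rw [← hKdef] at h
    have h2 : J (u n) ≤ m + 1 := by
      have h3 := hJlt n
      have h4 : 1/((n:ℝ)+1) ≤ 1 := by
        rw [div_le_one (by positivity)]
        simp [Nat.cast_nonneg]
      linarith
    have h5 : 0 ≤ (β/4) * (∫ t, ‖u n t‖ ^ 2 ∂μ₀) :=
      mul_nonneg (by positivity) (integral_nonneg fun t => sq_nonneg _)
    have h6 : (c/4) * (∫ t, ‖lqState zy0 zy (u n) t‖ ^ 2 ∂μ₀) ≤ m + 1 + K := by linarith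
    have h7 : (0:ℝ) < c/4 := by positivity
    calc ∫ t, ‖lqState zy0 zy (u n) t‖ ^ 2 ∂μ₀
        = (4/c) * ((c/4) * (∫ t, ‖lqState zy0 zy (u n) t‖ ^ 2 ∂μ₀)) := by
          field_simp
      _ ≤ (4/c) * (m + 1 + K) := by
          apply mul_le_mul_of_nonneg_left h6 (by positivity)
  -- the state of the limit control is in L²
  have hystar_aesm : AEStronglyMeasurable (lqState zy0 zy ustar) μ₀ := lq_state_aesm hustar hzy
  have hy_fatou : ∫⁻ t, ENNReal.ofReal (‖lqState zy0 zy ustar t‖ ^ 2) ∂μ₀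
      ≤ ENNReal.ofReal ((4/c) * (m + 1 + K)) := by
    have hb : ∀ n, ∫⁻ t, ENNReal.ofReal (‖lqState zy0 zy (u n) t‖ ^ 2) ∂μ₀
        ≤ ENNReal.ofReal ((4/c) * (m + 1 + K)) := by
      intro n
      rw [← ofReal_integral_eq_lintegral_ofReal (lq_normsq_integrable (hadm n).2.1)
        (Eventually.of_forall fun t => sq_nonneg _)]
      exact ENNReal.ofReal_le_ofReal (hybnd n)
    have hmeasn : ∀ n, AEMeasurable (fun t => ENNReal.ofReal (‖lqState zy0 zy (u n) t‖ ^ 2)) μ₀ :=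
      fun n => ENNReal.measurable_ofReal.comp_aemeasurable
        (((hadm n).2.1.1.norm.aemeasurable).pow_const 2)
    calc ∫⁻ t, ENNReal.ofReal (‖lqState zy0 zy ustar t‖ ^ 2) ∂μ₀
        = ∫⁻ t, Filter.liminf (fun n => ENNReal.ofReal (‖lqState zy0 zy (u n) t‖ ^ 2)) atTop ∂μ₀ := by
          apply lintegral_congr_ae
          filter_upwards [ae_restrict_mem measurableSet_Ioi] with t ht
          exact (((ENNReal.tendsto_ofReal (((hstate t ht).norm).pow 2))).liminf_eq).symm
      _ ≤ Filter.liminf (fun n => ∫⁻ t, ENNReal.ofReal (‖lqState zy0 zy (u n) t‖ ^ 2) ∂μ₀) atTop :=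
          lintegral_liminf_le' hmeasn
      _ ≤ ENNReal.ofReal ((4/c) * (m + 1 + K)) := by
          refine le_trans (liminf_le_liminf (Eventually.of_forall hb)) ?_
          simp [Filter.liminf_const]
  have hystar : MemLp (lqState zy0 zy ustar) 2 μ₀ := by
    rw [memLp_two_iff_integrable_sq_norm hystar_aesm]
    refine ⟨(continuous_pow 2).comp_aestronglyMeasurable hystar_aesm.norm, ?_⟩
    rw [hasFiniteIntegral_iff_ofReal (Eventually.of_forall fun t => sq_nonneg _)]
    exact lt_of_le_of_lt hy_fatou ENNReal.ofReal_lt_top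
  have hadm_star : Adm ustar :=
    ⟨hustar, hystar, lq_integrand_integrable hMeas hCb hzp hzu hustar hystar⟩
  -- a.e. convergent subsequence
  have htm : TendstoInMeasure μ₀ u atTop ustar := by
    refine tendstoInMeasure_of_tendsto_eLpNorm (p := 2) (by norm_num)
      (fun n => (hadm n).1.1) hustar.1 ?_
    exact heL
  obtain ⟨ns, hns_mono, hns_ae⟩ := htm.exists_seq_tendsto_ae
  -- shifted nonnegative integrand and Fatou for the cost
  have hk_int : Integrable (fun t => (1/c) * ‖zp t‖ ^ 2 + (1/β) * ‖zu t‖ ^ 2) μ₀ :=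
    ((lq_normsq_integrable hzp).const_mul _).add ((lq_normsq_integrable hzu).const_mul _)
  have hkK : ∫ t, ((1/c) * ‖zp t‖ ^ 2 + (1/β) * ‖zu t‖ ^ 2) ∂μ₀ = K := by
    rw [integral_add ((lq_normsq_integrable hzp).const_mul _)
      ((lq_normsq_integrable hzu).const_mul _), integral_const_mul, integral_const_mul]
  have hnn : ∀ w : ℝ → E2, ∀ᵐ t ∂μ₀,
      0 ≤ lqIntegrand β M zp zu zy0 zy w t + ((1/c) * ‖zp t‖ ^ 2 + (1/β) * ‖zu t‖ ^ 2) := by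
    intro w
    filter_upwards [lq_integrand_lower (zp := zp) (zu := zu) (zy0 := zy0) (zy := zy) hc hβ hPos w]
      with t ht
    have h1 : 0 ≤ (c/4) * ‖lqState zy0 zy w t‖ ^ 2 := mul_nonneg (by positivity) (sq_nonneg _)
    have h2 : 0 ≤ (β/4) * ‖w t‖ ^ 2 := mul_nonneg (by positivity) (sq_nonneg _)
    linarith
  have heach : ∀ n, lqAdm β M zp zu zy0 zy (u n) →
      ∫⁻ t, ENNReal.ofReal (lqIntegrand β M zp zu zy0 zy (u n) t
        + ((1/c) * ‖zp t‖ ^ 2 + (1/β) * ‖zu t‖ ^ 2)) ∂μ₀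
      = ENNReal.ofReal (J (u n) + K) := by
    intro n hn
    have hint : Integrable (fun t => lqIntegrand β M zp zu zy0 zy (u n) t
        + ((1/c) * ‖zp t‖ ^ 2 + (1/β) * ‖zu t‖ ^ 2)) μ₀ := hn.2.2.add hk_int
    rw [← ofReal_integral_eq_lintegral_ofReal hint (hnn (u n))]
    congr 1
    rw [integral_add hn.2.2 hk_int, hkK]
    rfl
  have hfatou : ∫⁻ t, ENNReal.ofReal (lqIntegrand β M zp zu zy0 zy ustar t
      + ((1/c) * ‖zp t‖ ^ 2 + (1/β) * ‖zu t‖ ^ 2)) ∂μ₀ ≤ ENNReal.ofReal (m + K) := by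
    have hmeasj : ∀ j, AEMeasurable (fun t => ENNReal.ofReal
        (lqIntegrand β M zp zu zy0 zy (u (ns j)) t
          + ((1/c) * ‖zp t‖ ^ 2 + (1/β) * ‖zu t‖ ^ 2))) μ₀ :=
      fun j => ENNReal.measurable_ofReal.comp_aemeasurable
        (((hadm (ns j)).2.2.add hk_int).aestronglyMeasurable.aemeasurable)
    have hconv : ∀ᵐ t ∂μ₀, Tendsto (fun j => ENNReal.ofReal
        (lqIntegrand β M zp zu zy0 zy (u (ns j)) t
          + ((1/c) * ‖zp t‖ ^ 2 + (1/β) * ‖zu t‖ ^ 2))) atTop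
        (𝓝 (ENNReal.ofReal (lqIntegrand β M zp zu zy0 zy ustar t
          + ((1/c) * ‖zp t‖ ^ 2 + (1/β) * ‖zu t‖ ^ 2)))) := by
      filter_upwards [hns_ae, ae_restrict_mem measurableSet_Ioi] with t htmt ht
      have hy := (hstate t ht).comp hns_mono.tendsto_atTop
      have hMy : Tendsto (fun j => M t (lqState zy0 zy (u (ns j)) t)) atTop
          (𝓝 (M t (lqState zy0 zy ustar t))) := ((M t).continuous.tendsto _).comp hy
      have h1 := hMy.inner (𝕜 := ℝ) hy
      have h2 := (tendsto_const_nhds (x := zp t)).inner (𝕜 := ℝ) hy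
      have h3 := (htmt.norm).pow 2
      have h4 := htmt.inner (𝕜 := ℝ) (tendsto_const_nhds (x := zu t))
      have h5 : Tendsto (fun j => lqIntegrand β M zp zu zy0 zy (u (ns j)) t) atTop
          (𝓝 (lqIntegrand β M zp zu zy0 zy ustar t)) := by
        simp only [lqIntegrand]
        exact (((h1.const_mul (1/2:ℝ)).sub h2).add (h3.const_mul (β/2))).sub h4
      exact ENNReal.tendsto_ofReal (h5.add_const _)
    calc ∫⁻ t, ENNReal.ofReal (lqIntegrand β M zp zu zy0 zy ustar t
          + ((1/c) * ‖zp t‖ ^ 2 + (1/β) * ‖zu t‖ ^ 2)) ∂μ₀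
        = ∫⁻ t, Filter.liminf (fun j => ENNReal.ofReal
            (lqIntegrand β M zp zu zy0 zy (u (ns j)) t
              + ((1/c) * ‖zp t‖ ^ 2 + (1/β) * ‖zu t‖ ^ 2))) atTop ∂μ₀ := by
          apply lintegral_congr_ae
          filter_upwards [hconv] with t h
          exact (h.liminf_eq).symm
      _ ≤ Filter.liminf (fun j => ∫⁻ t, ENNReal.ofReal
            (lqIntegrand β M zp zu zy0 zy (u (ns j)) t
              + ((1/c) * ‖zp t‖ ^ 2 + (1/β) * ‖zu t‖ ^ 2)) ∂μ₀) atTop :=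
          lintegral_liminf_le' hmeasj
      _ = Filter.liminf (fun j => ENNReal.ofReal (J (u (ns j)) + K)) atTop := by
          congr 1
          funext j
          exact heach (ns j) (hadm (ns j))
      _ = ENNReal.ofReal (m + K) := by
          have hlimJ : Tendsto (fun j => ENNReal.ofReal (J (u (ns j)) + K)) atTop
              (𝓝 (ENNReal.ofReal (m + K))) :=
            ENNReal.tendsto_ofReal ((hJtend.comp hns_mono.tendsto_atTop).add_const K)
          exact hlimJ.liminf_eq
  -- J ustar ≤ m
  have hJstar : J ustar ≤ m := by
    have hint : Integrable (fun t => lqIntegrand β M zp zu zy0 zy ustar t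
        + ((1/c) * ‖zp t‖ ^ 2 + (1/β) * ‖zu t‖ ^ 2)) μ₀ := hadm_star.2.2.add hk_int
    have h1 := ofReal_integral_eq_lintegral_ofReal hint (hnn ustar)
    have h2 : ENNReal.ofReal (∫ t, (lqIntegrand β M zp zu zy0 zy ustar t
        + ((1/c) * ‖zp t‖ ^ 2 + (1/β) * ‖zu t‖ ^ 2)) ∂μ₀) ≤ ENNReal.ofReal (m + K) := by
      rw [h1]; exact hfatou
    have h3 : ∫ t, (lqIntegrand β M zp zu zy0 zy ustar t
        + ((1/c) * ‖zp t‖ ^ 2 + (1/β) * ‖zu t‖ ^ 2)) ∂μ₀ ≤ m + K :=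
      (ENNReal.ofReal_le_ofReal_iff (by linarith)).mp h2
    rw [integral_add hadm_star.2.2 hk_int, hkK] at h3
    have h4 : ∫ t, lqIntegrand β M zp zu zy0 zy ustar t ∂μ₀ = J ustar := rfl
    linarith [h4 ▸ h3]
  -- conclusion
  refine ⟨ustar, hadm_star, fun v hv => le_trans hJstar (hm_le v hv), ?_⟩
  intro w hw hwmin
  have h1 : J w ≤ J ustar := hwmin ustar hadm_star
  have h2 : J ustar ≤ J w := le_trans hJstar (hm_le w hw)
  have hmid_adm := lq_mid_adm hMeas hCb hzp hzu hzy hw hadm_star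
  have hmid := lq_strong_conv hc hMeas hCb hPos hzp hzu hzy hw hadm_star
  have h3 : J ustar ≤ J (fun s => (2⁻¹:ℝ) • (w s + ustar s)) :=
    le_trans hJstar (hm_le _ hmid_adm)
  have h4 : ∫ t, ‖w t - ustar t‖ ^ 2 ∂μ₀ ≤ 0 := by nlinarith [hβ, hmid, h3, h1, h2]
  have h5 : ∫ t, ‖w t - ustar t‖ ^ 2 ∂μ₀ = 0 :=
    le_antisymm h4 (integral_nonneg fun t => sq_nonneg _)
  have h6 : (fun t => ‖w t - ustar t‖ ^ 2) =ᵐ[μ₀] 0 :=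
    (integral_eq_zero_iff_of_nonneg_ae (Eventually.of_forall fun t => sq_nonneg _)
      (lq_normsq_integrable (hw.1.sub hustar))).mp h5
  filter_upwards [h6] with t ht
  have ht' : ‖w t - ustar t‖ ^ 2 = 0 := ht
  have : w t - ustar t = 0 := by
    rwa [pow_eq_zero_iff (by norm_num), norm_eq_zero] at ht'
  exact sub_eq_zero.mp this
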